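/- Let 0 ≤ α < n and let K^α be an α-fractional kernel that is elliptic in the sense of Stein: there is a unit vector u₀ and c > 0 with |K^α(x, x + t u₀)| ≥ c|t|^{α-n} for all t ∈ ℝ. Suppose σ, ω are doubling measures. If the associated operator T^α satisfies the norm inequality ‖T^α_σ f‖_{L²(ω)} ≤ 𝔑 ‖f‖_{L²(σ)} uniformly over admissible truncations, then the classical Muckenhoupt constant satisfies √(A₂^α(σ,ω)) ≤ C·𝔑 for a constant C depending only on n, α, the Calderón–Zygmund constant of K^α, the ellipticity constant c, and the doubling constants of σ and ω. -/

import Mathlib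

/-!
Test the norm inequality on two small cubes `F ∋ c` and `E ∋ y₀ = c + l u₀` of side `ε l`.
On `F × E` the smoothness estimates keep `K x y` within `(ce / 2) l^{α-n}` of `K c y₀`, whose size
is at least `ce l^{α-n}` by ellipticity, so `|∫_F ∫_E K dσ dω| ≥ (ce / 2) l^{α-n} σ(E) ω(F)`.
Against the norm inequality this gives `σ(E) ω(F) ≤ (2 N / ce)² l^{2(n-α)}`, and a fixed number of
doublings passes from `E` and `F` to the cube of side `l` centred at `c`.
-/

open MeasureTheory ENNReal

noncomputable section

/-- The axis-parallel cube in Euclidean `ℝⁿ` with center `c` and side length `l`. -/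
def CubeE (n : ℕ) (c : EuclideanSpace ℝ (Fin n)) (l : ℝ) :
    Set (EuclideanSpace ℝ (Fin n)) :=
  {x | ∀ i, |x i - c i| ≤ l / 2}

/-- A measure is doubling with constant `C` if `μ(2Q) ≤ C μ(Q)` for all cubes `Q`. -/
def IsDoublingE {n : ℕ} (μ : Measure (EuclideanSpace ℝ (Fin n))) (C : ℝ) : Prop :=
  ∀ (c : EuclideanSpace ℝ (Fin n)) (l : ℝ), 0 < l →
    μ (CubeE n c (2 * l)) ≤ ENNReal.ofReal C * μ (CubeE n c l)

open Metric Set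
open scoped NNReal

section Kernel

variable {X : Type*} [PseudoMetricSpace X]

def IsSmoothInFst (K : X → X → ℝ) (C γ : ℝ) : Prop :=
  ∀ x x' y, x ≠ y → 2 * dist x x' ≤ dist x y →
    |K x y - K x' y| ≤ C * (dist x x' / dist x y) * dist x y ^ γ

def IsSmoothInSnd (K : X → X → ℝ) (C γ : ℝ) : Prop :=
  ∀ x y y', x ≠ y → 2 * dist y y' ≤ dist x y →
    |K x y - K x y'| ≤ C * (dist y y' / dist x y) * dist x y ^ γ

theorem IsSmoothInSnd.isSmoothInFst_flip {K : X → X → ℝ} {C γ : ℝ} (hK : IsSmoothInSnd K C γ) :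
    IsSmoothInFst (flip K) C γ := fun y y' x hyx h => by
  have := hK x y y' hyx.symm (by rwa [dist_comm x y])
  rwa [dist_comm x y] at this

theorem div_mul_rpow_le_of_half_le {γ l d δ : ℝ} (hγ : γ ≤ 1) (hl : 0 < l) (hd : l / 2 ≤ d)
    (hδ : 0 ≤ δ) : δ / d * d ^ γ ≤ 2 ^ (1 - γ) * l ^ (γ - 1) * δ := by
  have hd0 : 0 < d := by linarith
  have hpow : d ^ (γ - 1) ≤ (l / 2) ^ (γ - 1) :=
    Real.rpow_le_rpow_of_nonpos (by positivity) hd (by linarith)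
  calc δ / d * d ^ γ = δ * d ^ (γ - 1) := by rw [Real.rpow_sub_one hd0.ne']; ring
    _ ≤ δ * (l / 2) ^ (γ - 1) := by gcongr
    _ = 2 ^ (1 - γ) * l ^ (γ - 1) * δ := by
      rw [Real.div_rpow hl.le zero_le_two, show 1 - γ = -(γ - 1) by ring,
        Real.rpow_neg zero_le_two]
      ring

section SmoothInFst

variable {K : X → X → ℝ} {C γ l : ℝ} {c y₀ x x' y : X}

theorem IsSmoothInFst.abs_sub_le (hK : IsSmoothInFst K C γ) (hC : 0 ≤ C) (hγ : γ ≤ 1)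
    (hl : 0 < l) (hcy : dist c y₀ = l) (hx : dist x c ≤ l / 8) (hx' : dist x' c ≤ l / 8)
    (hy : dist y y₀ ≤ l / 8) :
    |K x y - K x' y| ≤ C * 2 ^ (1 - γ) * l ^ (γ - 1) * dist x x' := by
  have hxy : 3 * l / 4 ≤ dist x y := by
    have := dist_triangle4 c x y y₀
    rw [dist_comm c x] at this
    linarith
  have hxx' : dist x x' ≤ l / 4 := by linarith [dist_triangle_right x x' c]
  have hne : x ≠ y := fun h => by rw [h, dist_self] at hxy; linarith
  calc |K x y - K x' y| ≤ C * (dist x x' / dist x y) * dist x y ^ γ := hK x x' y hne (by linarith)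
    _ ≤ C * (2 ^ (1 - γ) * l ^ (γ - 1) * dist x x') := by
      rw [mul_assoc]
      exact mul_le_mul_of_nonneg_left
        (div_mul_rpow_le_of_half_le hγ hl (by linarith) dist_nonneg) hC
    _ = C * 2 ^ (1 - γ) * l ^ (γ - 1) * dist x x' := by ring

theorem IsSmoothInFst.lipschitzOnWith (hK : IsSmoothInFst K C γ) (hC : 0 ≤ C) (hγ : γ ≤ 1)
    (hl : 0 < l) (hcy : dist c y₀ = l) (hy : dist y y₀ ≤ l / 8) :
    LipschitzOnWith (C * 2 ^ (1 - γ) * l ^ (γ - 1)).toNNReal (K · y) (closedBall c (l / 8)) :=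
  LipschitzOnWith.of_dist_le' fun _ hx _ hx' => by
    rw [Real.dist_eq]
    exact hK.abs_sub_le hC hγ hl hcy hx hx' hy

end SmoothInFst

theorem abs_sub_le_of_isSmoothIn {K : X → X → ℝ} {C γ l δ : ℝ} {c y₀ x y : X}
    (hK₁ : IsSmoothInFst K C γ) (hK₂ : IsSmoothInSnd K C γ) (hC : 0 ≤ C) (hγ : γ ≤ 1)
    (hl : 0 < l) (hcy : dist c y₀ = l) (hδ : δ ≤ 1 / 8) (hx : dist x c ≤ δ * l)
    (hy : dist y y₀ ≤ δ * l) :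
    |K x y - K c y₀| ≤ C * 2 ^ (2 - γ) * δ * l ^ γ := by
  have hδl : δ * l ≤ l / 8 := by nlinarith
  have hc : dist c c ≤ l / 8 := by rw [dist_self]; positivity
  have hy₀ : dist y₀ y₀ ≤ l / 8 := by rw [dist_self]; positivity
  have h₁ := hK₁.abs_sub_le hC hγ hl hcy (hx.trans hδl) hc (hy.trans hδl)
  have h₂ := hK₂.isSmoothInFst_flip.abs_sub_le hC hγ hl (by rwa [dist_comm]) (hy.trans hδl) hy₀ hc
  simp only [flip] at h₂
  have htwo : (2 : ℝ) ^ (2 - γ) = 2 * 2 ^ (1 - γ) := by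
    rw [show 2 - γ = 1 + (1 - γ) by ring, Real.rpow_add two_pos, Real.rpow_one]
  calc |K x y - K c y₀| ≤ |K x y - K c y| + |K c y - K c y₀| := abs_sub_le _ _ _
    _ ≤ C * 2 ^ (1 - γ) * l ^ (γ - 1) * (δ * l) + C * 2 ^ (1 - γ) * l ^ (γ - 1) * (δ * l) := by
      gcongr
      · exact h₁.trans (by gcongr)
      · exact h₂.trans (by gcongr)
    _ = C * 2 ^ (2 - γ) * δ * l ^ γ := by
      rw [htwo, Real.rpow_sub_one hl.ne']
      field_simp
      ring

end Kernel

section Integral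

theorem lipschitzOnWith_setIntegral {X Y E : Type*} [PseudoMetricSpace X] [MeasurableSpace Y]
    [NormedAddCommGroup E] [NormedSpace ℝ E] {μ : Measure Y} {f : X → Y → E} {s : Set X}
    {t : Set Y} {L : ℝ≥0} (ht : μ t < ⊤) (hint : ∀ x ∈ s, IntegrableOn (f x) t μ)
    (hf : ∀ y ∈ t, LipschitzOnWith L (f · y) s) :
    LipschitzOnWith (L * μ.real t).toNNReal (fun x => ∫ y in t, f x y ∂μ) s := by
  refine LipschitzOnWith.of_dist_le' fun x hx x' hx' => ?_
  rw [dist_eq_norm, ← integral_sub (hint x hx) (hint x' hx')]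
  calc ‖∫ y in t, (f x y - f x' y) ∂μ‖ ≤ L * dist x x' * μ.real t :=
        norm_setIntegral_le_of_norm_le_const ht fun y hy => by
          rw [← dist_eq_norm]
          exact (hf y hy).dist_le_mul x hx x' hx'
    _ = L * μ.real t * dist x x' := by ring

variable {X Y : Type*} [MetricSpace X] [MeasurableSpace X] [OpensMeasurableSpace X]
  [TopologicalSpace Y] [T2Space Y] [MeasurableSpace Y] [OpensMeasurableSpace Y]
  {σ : Measure Y} {ω : Measure X} [IsFiniteMeasureOnCompacts σ] [IsFiniteMeasureOnCompacts ω]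
  {f : X → Y → ℝ} {F : Set X} {E : Set Y} {L : ℝ≥0} {m : ℝ}

theorem le_setIntegral_setIntegral (hF : IsCompact F) (hE : IsCompact E)
    (hfx : ∀ y ∈ E, LipschitzOnWith L (f · y) F) (hfy : ∀ x ∈ F, ContinuousOn (f x) E)
    (hm : ∀ x ∈ F, ∀ y ∈ E, m ≤ f x y) :
    m * σ.real E * ω.real F ≤ ∫ x in F, ∫ y in E, f x y ∂σ ∂ω := by
  have hint : ∀ x ∈ F, IntegrableOn (f x) E σ := fun x hx => (hfy x hx).integrableOn_compact hE
  have hg := lipschitzOnWith_setIntegral hE.measure_lt_top hint hfx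
  refine setIntegral_ge_of_const_le_real hF.measurableSet hF.measure_ne_top (fun x hx => ?_)
    (hg.continuousOn.integrableOn_compact hF)
  exact setIntegral_ge_of_const_le_real hE.measurableSet hE.measure_ne_top (hm x hx) (hint x hx)

theorem le_abs_setIntegral_setIntegral {a : ℝ} (hF : IsCompact F) (hE : IsCompact E)
    (hfx : ∀ y ∈ E, LipschitzOnWith L (f · y) F) (hfy : ∀ x ∈ F, ContinuousOn (f x) E)
    (hfa : ∀ x ∈ F, ∀ y ∈ E, |f x y - a| ≤ m) :
    (|a| - m) * σ.real E * ω.real F ≤ |∫ x in F, ∫ y in E, f x y ∂σ ∂ω| := by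
  rcases le_total 0 a with ha | ha
  · refine (le_setIntegral_setIntegral hF hE hfx hfy fun x hx y hy => ?_).trans (le_abs_self _)
    linarith [abs_of_nonneg ha, (abs_le.mp (hfa x hx y hy)).1]
  · refine (le_setIntegral_setIntegral (f := fun x y => -f x y) hF hE (fun y hy => (hfx y hy).neg)
      (fun x hx => (hfy x hx).neg) fun x hx y hy => ?_).trans ?_
    · linarith [abs_of_nonpos ha, (abs_le.mp (hfa x hx y hy)).2]
    · simp only [integral_neg]
      exact neg_le_abs _

end Integral

theorem mul_le_sq_of_mul_le_mul_sqrt {a b κ N : ℝ} (ha : 0 ≤ a) (hb : 0 ≤ b) (hκ : 0 < κ)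
    (h : κ * a * b ≤ N * √a * √b) : a * b ≤ (N / κ) ^ 2 := by
  have hr : √(a * b) ^ 2 = a * b := Real.sq_sqrt (mul_nonneg ha hb)
  rcases (Real.sqrt_nonneg (a * b)).eq_or_lt with h0 | h0
  · rw [← hr, ← h0, zero_pow two_ne_zero]
    positivity
  · have hκr : κ * √(a * b) ≤ N := by
      refine le_of_mul_le_mul_right ?_ h0
      calc κ * √(a * b) * √(a * b) = κ * a * b := by rw [mul_assoc, ← sq, hr, mul_assoc]
        _ ≤ N * √(a * b) := by rwa [Real.sqrt_mul ha, ← mul_assoc]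
    rw [← hr]
    gcongr
    rwa [le_div_iff₀' hκ]

section Testing

variable {X : Type*} [MetricSpace X] [MeasurableSpace X] [OpensMeasurableSpace X]
  {σ ω : Measure X} [IsFiniteMeasureOnCompacts σ] [IsFiniteMeasureOnCompacts ω]

theorem measureReal_mul_le_of_isSmoothIn {K : X → X → ℝ} {C γ ce N l δ : ℝ} {c y₀ : X}
    {E F : Set X} (hK₁ : IsSmoothInFst K C γ) (hK₂ : IsSmoothInSnd K C γ) (hC : 0 ≤ C)
    (hγ : γ ≤ 1) (hce : 0 < ce) (hl : 0 < l) (hcy : dist c y₀ = l)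
    (hell : ce * l ^ γ ≤ |K c y₀|) (hδ : δ ≤ 1 / 8) (hδK : C * 2 ^ (2 - γ) * δ ≤ ce / 2)
    (hF : IsCompact F) (hE : IsCompact E) (hFc : F ⊆ closedBall c (δ * l))
    (hEy : E ⊆ closedBall y₀ (δ * l))
    (hN : |∫ x in F, ∫ y in E, K x y ∂σ ∂ω| ≤ N * √(σ.real E) * √(ω.real F)) :
    σ.real E * ω.real F ≤ (2 / ce * N) ^ 2 * l ^ (-2 * γ) := by
  have hδl : δ * l ≤ l / 8 := by nlinarith
  have hF8 : F ⊆ closedBall c (l / 8) := hFc.trans (closedBall_subset_closedBall hδl)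
  have hE8 : E ⊆ closedBall y₀ (l / 8) := hEy.trans (closedBall_subset_closedBall hδl)
  have hfx : ∀ y ∈ E, LipschitzOnWith (C * 2 ^ (1 - γ) * l ^ (γ - 1)).toNNReal (K · y) F :=
    fun y hy => (hK₁.lipschitzOnWith hC hγ hl hcy (hE8 hy)).mono hF8
  have hfy : ∀ x ∈ F, ContinuousOn (K x) E := fun x hx =>
    ((hK₂.isSmoothInFst_flip.lipschitzOnWith hC hγ hl (by rwa [dist_comm]) (hF8 hx)).mono
      hE8).continuousOn
  have hclose : ∀ x ∈ F, ∀ y ∈ E, |K x y - K c y₀| ≤ ce / 2 * l ^ γ := fun x hx y hy =>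
    (abs_sub_le_of_isSmoothIn hK₁ hK₂ hC hγ hl hcy hδ (hFc hx) (hEy hy)).trans
      (mul_le_mul_of_nonneg_right hδK (by positivity))
  have hlow := le_abs_setIntegral_setIntegral (σ := σ) (ω := ω) hF hE hfx hfy hclose
  have hκ : 0 < ce / 2 * l ^ γ := by positivity
  have hprod : ce / 2 * l ^ γ * σ.real E * ω.real F ≤ N * √(σ.real E) * √(ω.real F) :=
    calc ce / 2 * l ^ γ * σ.real E * ω.real F
        ≤ (|K c y₀| - ce / 2 * l ^ γ) * σ.real E * ω.real F := by gcongr; linarith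
      _ ≤ N * √(σ.real E) * √(ω.real F) := hlow.trans hN
  calc σ.real E * ω.real F ≤ (N / (ce / 2 * l ^ γ)) ^ 2 :=
        mul_le_sq_of_mul_le_mul_sqrt measureReal_nonneg measureReal_nonneg hκ hprod
    _ = (2 / ce * N) ^ 2 * l ^ (-2 * γ) := by
      rw [show -2 * γ = -γ * 2 by ring, Real.rpow_mul hl.le, Real.rpow_two, Real.rpow_neg hl.le]
      field_simp

end Testing

section Cube

variable {n : ℕ}

theorem cubeE_subset_closedBall (c : EuclideanSpace ℝ (Fin n)) {l : ℝ} (hl : 0 ≤ l) :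
    CubeE n c l ⊆ closedBall c (√n * l / 2) := by
  intro x hx
  rw [mem_closedBall, EuclideanSpace.dist_eq]
  calc √(∑ i, dist (x i) (c i) ^ 2) ≤ √(∑ _i : Fin n, (l / 2) ^ 2) := by
        gcongr with i
        rw [Real.dist_eq]
        exact hx i
    _ = √n * l / 2 := by
      rw [Finset.sum_const, Finset.card_univ, Fintype.card_fin, nsmul_eq_mul,
        Real.sqrt_mul n.cast_nonneg, Real.sqrt_sq (by positivity)]
      ring

theorem isCompact_cubeE (c : EuclideanSpace ℝ (Fin n)) {l : ℝ} (hl : 0 ≤ l) :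
    IsCompact (CubeE n c l) := by
  refine (isCompact_closedBall c _).of_isClosed_subset ?_ (cubeE_subset_closedBall c hl)
  simp only [CubeE, ofPred_forall]
  exact isClosed_iInter fun i => isClosed_le (by fun_prop) continuous_const

theorem cubeE_subset_cubeE {c c' : EuclideanSpace ℝ (Fin n)} {l l' : ℝ}
    (h : dist c c' + l / 2 ≤ l' / 2) : CubeE n c l ⊆ CubeE n c' l' := fun x hx i =>
  calc |x i - c' i| ≤ |x i - c i| + |c i - c' i| := abs_sub_le _ _ _
    _ ≤ l / 2 + dist c c' :=
      add_le_add (hx i) (by simpa [Real.dist_eq] using PiLp.dist_apply_le c c' i)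
    _ ≤ l' / 2 := by linarith

variable {μ : Measure (EuclideanSpace ℝ (Fin n))} {C C' : ℝ}

theorem IsDoublingE.mono (hμ : IsDoublingE μ C) (h : C ≤ C') : IsDoublingE μ C' := fun c l hl =>
  (hμ c l hl).trans (by gcongr)

theorem IsDoublingE.measureReal_cubeE_pow_mul_le [IsFiniteMeasureOnCompacts μ]
    (hμ : IsDoublingE μ C) (hC : 0 ≤ C) (c : EuclideanSpace ℝ (Fin n)) {L : ℝ} (hL : 0 < L)
    (k : ℕ) : μ.real (CubeE n c (2 ^ k * L)) ≤ C ^ k * μ.real (CubeE n c L) := by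
  induction k with
  | zero => simp
  | succ k ih =>
    have hk : 0 < 2 ^ k * L := by positivity
    have hdouble :
        μ.real (CubeE n c (2 * (2 ^ k * L))) ≤ C * μ.real (CubeE n c (2 ^ k * L)) := by
      rw [measureReal_def, measureReal_def, ← ENNReal.toReal_ofReal hC, ← ENNReal.toReal_mul]
      exact ENNReal.toReal_mono
        (ENNReal.mul_ne_top ENNReal.ofReal_ne_top (isCompact_cubeE c hk.le).measure_ne_top)
        (hμ c _ hk)
    calc μ.real (CubeE n c (2 ^ (k + 1) * L)) = μ.real (CubeE n c (2 * (2 ^ k * L))) := by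
          rw [pow_succ', mul_assoc]
      _ ≤ C * (C ^ k * μ.real (CubeE n c L)) := hdouble.trans (by gcongr)
      _ = C ^ (k + 1) * μ.real (CubeE n c L) := by ring

theorem IsDoublingE.measureReal_cubeE_le [IsFiniteMeasureOnCompacts μ] (hμ : IsDoublingE μ C)
    {c c' : EuclideanSpace ℝ (Fin n)} {l L : ℝ} (hL : 0 < L) {k : ℕ}
    (h : dist c c' + l / 2 ≤ 2 ^ k * L / 2) :
    μ.real (CubeE n c l) ≤ max C 1 ^ k * μ.real (CubeE n c' L) :=
  (measureReal_mono (cubeE_subset_cubeE h)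
    (isCompact_cubeE c' (by positivity)).measure_ne_top).trans
    ((hμ.mono (le_max_left C 1)).measureReal_cubeE_pow_mul_le
      (zero_le_one.trans (le_max_right C 1)) c' hL k)

end Cube

theorem elliptic_muckenhoupt_le_norm_general (n : ℕ) (α C_CZ ce Cσ Cω : ℝ)
    (hn : 0 < n) (hαn : α < n) (hCZ : 0 < C_CZ) (hce : 0 < ce) :
    ∃ C : ℝ, 0 < C ∧
      ∀ (K : EuclideanSpace ℝ (Fin n) → EuclideanSpace ℝ (Fin n) → ℝ)
        (u₀ : EuclideanSpace ℝ (Fin n)) (σ ω : Measure (EuclideanSpace ℝ (Fin n)))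
        (N : ℝ),
        IsLocallyFiniteMeasure σ → IsLocallyFiniteMeasure ω →
        IsDoublingE σ Cσ → IsDoublingE ω Cω → 0 ≤ N →
        ‖u₀‖ = 1 →
        -- kernel size condition
        (∀ x y, x ≠ y → |K x y| ≤ C_CZ * dist x y ^ (α - n)) →
        -- kernel smoothness in the first variable
        (∀ x x' y, x ≠ y → 2 * dist x x' ≤ dist x y →
          |K x y - K x' y| ≤ C_CZ * (dist x x' / dist x y) * dist x y ^ (α - n)) →
        -- kernel smoothness in the second variable
        (∀ x y y', x ≠ y → 2 * dist y y' ≤ dist x y →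
          |K x y - K x y'| ≤ C_CZ * (dist y y' / dist x y) * dist x y ^ (α - n)) →
        -- ellipticity in the sense of Stein
        (∀ (x : EuclideanSpace ℝ (Fin n)) (t : ℝ), t ≠ 0 →
          ce * |t| ^ (α - n) ≤ |K x (x + t • u₀)|) →
        -- the two weight norm inequality, in bilinear form on disjoint bounded sets
        (∀ (E F : Set (EuclideanSpace ℝ (Fin n))), MeasurableSet E → MeasurableSet F →
          Bornology.IsBounded E → Bornology.IsBounded F → Disjoint E F →
          |∫ x in F, ∫ y in E, K x y ∂σ ∂ω| ≤
            N * Real.sqrt (σ E).toReal * Real.sqrt (ω F).toReal) →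
        -- conclusion : `A₂^α(σ,ω) ≤ (C 𝔑)²`
        ∀ (c : EuclideanSpace ℝ (Fin n)) (l : ℝ), 0 < l →
          (σ (CubeE n c l)).toReal * (ω (CubeE n c l)).toReal ≤
            (C * N) ^ 2 * l ^ (2 * ((n : ℝ) - α)) := by
  obtain ⟨δ, hδ0, hδ8, hδK⟩ :
      ∃ δ : ℝ, 0 < δ ∧ δ ≤ 1 / 8 ∧ C_CZ * 2 ^ (2 - (α - n)) * δ ≤ ce / 2 :=
    ⟨min (1 / 8) (ce / 2 / (C_CZ * 2 ^ (2 - (α - n)))), by positivity, min_le_left _ _,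
      (le_div_iff₀' (by positivity)).mp (min_le_right _ _)⟩
  set ε := 2 * δ / √n
  have hε : 0 < ε := by positivity
  obtain ⟨k, hk⟩ : ∃ k : ℕ, 3 / ε < 2 ^ k := pow_unbounded_of_one_lt _ one_lt_two
  refine ⟨√(max Cσ 1 ^ k * max Cω 1 ^ k) * (2 / ce), by positivity, ?_⟩
  intro K u₀ σ ω N _ _ hσd hωd _ hu₀ _ hK₁ hK₂ hell hbil c l hl
  set y₀ := c + l • u₀
  have hcy : dist c y₀ = l := by
    rw [dist_self_add_right, norm_smul, hu₀, Real.norm_of_nonneg hl.le, mul_one]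
  have hεl : 0 < ε * l := by positivity
  have hcube (z) : IsCompact (CubeE n z (ε * l)) := isCompact_cubeE z hεl.le
  have hball (z) : CubeE n z (ε * l) ⊆ closedBall z (δ * l) :=
    (cubeE_subset_closedBall z hεl.le).trans_eq (by congr 1; simp only [ε]; field_simp)
  have hdisj : Disjoint (CubeE n y₀ (ε * l)) (CubeE n c (ε * l)) :=
    (closedBall_disjoint_closedBall (by rw [dist_comm, hcy]; nlinarith)).mono (hball y₀) (hball c)
  have hEF := measureReal_mul_le_of_isSmoothIn hK₁ hK₂ hCZ.le (by linarith) hce hl hcy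
    (by simpa [abs_of_pos hl] using hell c l hl.ne') hδ8 hδK (hcube c) (hcube y₀) (hball c)
    (hball y₀) (hbil _ _ (hcube y₀).measurableSet (hcube c).measurableSet (hcube y₀).isBounded
      (hcube c).isBounded hdisj)
  have hk3 : 3 * l ≤ 2 ^ k * (ε * l) := by nlinarith [(div_lt_iff₀ hε).mp hk]
  have hQσ := hσd.measureReal_cubeE_le hεl (c := c) (c' := y₀) (l := l) (k := k)
    (by rw [hcy]; linarith)
  have hQω := hωd.measureReal_cubeE_le hεl (c := c) (c' := c) (l := l) (k := k)
    (by rw [dist_self]; linarith)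
  calc σ.real (CubeE n c l) * ω.real (CubeE n c l)
      ≤ max Cσ 1 ^ k * σ.real (CubeE n y₀ (ε * l)) * (max Cω 1 ^ k * ω.real (CubeE n c (ε * l))) :=
        mul_le_mul hQσ hQω measureReal_nonneg (by positivity)
    _ ≤ max Cσ 1 ^ k * max Cω 1 ^ k * ((2 / ce * N) ^ 2 * l ^ (-2 * (α - n))) := by
        rw [mul_mul_mul_comm]
        gcongr
    _ = (√(max Cσ 1 ^ k * max Cω 1 ^ k) * (2 / ce) * N) ^ 2 * l ^ (2 * ((n : ℝ) - α)) := by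
        rw [mul_pow, mul_pow, mul_pow, Real.sq_sqrt (by positivity),
          show -2 * (α - n) = 2 * ((n : ℝ) - α) by ring]
        ring

/-- If `K^α` is an `α`-fractional CZ kernel, elliptic in the sense of Stein, and the
operator with kernel `K^α` satisfies the two weight norm inequality with constant `𝔑`
for a pair of doubling measures, then `√(A₂^α(σ,ω)) ≤ C 𝔑`. -/
theorem elliptic_muckenhoupt_le_norm (n : ℕ) (α C_CZ ce Cσ Cω : ℝ)
    (hn : 0 < n) (hα0 : 0 ≤ α) (hαn : α < n) (hCZ : 0 < C_CZ) (hce : 0 < ce) :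
    ∃ C : ℝ, 0 < C ∧
      ∀ (K : EuclideanSpace ℝ (Fin n) → EuclideanSpace ℝ (Fin n) → ℝ)
        (u₀ : EuclideanSpace ℝ (Fin n)) (σ ω : Measure (EuclideanSpace ℝ (Fin n)))
        (N : ℝ),
        IsLocallyFiniteMeasure σ → IsLocallyFiniteMeasure ω →
        IsDoublingE σ Cσ → IsDoublingE ω Cω → 0 ≤ N →
        ‖u₀‖ = 1 →
        -- kernel size condition
        (∀ x y, x ≠ y → |K x y| ≤ C_CZ * dist x y ^ (α - n)) →
        -- kernel smoothness in the first variable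
        (∀ x x' y, x ≠ y → 2 * dist x x' ≤ dist x y →
          |K x y - K x' y| ≤ C_CZ * (dist x x' / dist x y) * dist x y ^ (α - n)) →
        -- kernel smoothness in the second variable
        (∀ x y y', x ≠ y → 2 * dist y y' ≤ dist x y →
          |K x y - K x y'| ≤ C_CZ * (dist y y' / dist x y) * dist x y ^ (α - n)) →
        -- ellipticity in the sense of Stein
        (∀ (x : EuclideanSpace ℝ (Fin n)) (t : ℝ), t ≠ 0 →
          ce * |t| ^ (α - n) ≤ |K x (x + t • u₀)|) →
        -- the two weight norm inequality, in bilinear form on disjoint bounded sets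
        (∀ (E F : Set (EuclideanSpace ℝ (Fin n))), MeasurableSet E → MeasurableSet F →
          Bornology.IsBounded E → Bornology.IsBounded F → Disjoint E F →
          |∫ x in F, ∫ y in E, K x y ∂σ ∂ω| ≤
            N * Real.sqrt (σ E).toReal * Real.sqrt (ω F).toReal) →
        -- conclusion : `A₂^α(σ,ω) ≤ (C 𝔑)²`
        ∀ (c : EuclideanSpace ℝ (Fin n)) (l : ℝ), 0 < l →
          (σ (CubeE n c l)).toReal * (ω (CubeE n c l)).toReal ≤
            (C * N) ^ 2 * l ^ (2 * ((n : ℝ) - α)) :=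
  elliptic_muckenhoupt_le_norm_general n α C_CZ ce Cσ Cω hn hαn hCZ hce
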